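/- Every permutation p can be sorted by at most b(p)/2 block moves, where b(p) is the number of bad pairs of p. In particular, every permutation of length n can be sorted by at most ⌊(n+1)/2⌋ block moves. -/

import Mathlib

/-- Number of descents of a list (one-line notation). -/
def desNum (p : List ℕ) : ℕ :=
  ((Finset.range (p.length - 1)).filter (fun i => p.getD (i+1) 0 < p.getD i 0)).card

/-- The extension of `p` by a leading `0` and trailing `n+1`. -/
def extList (p : List ℕ) : List ℕ := 0 :: (p ++ [p.length + 1])

/-- Number of bad pairs of `p`. -/
def badNum (p : List ℕ) : ℕ :=
  ((Finset.range (p.length + 1)).filter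
    (fun i => (extList p).getD i 0 + 1 ≠ (extList p).getD (i+1) 0)).card

/-- `q` is obtained from `p` by one block move: interchanging two disjoint
nonempty blocks of consecutive entries. -/
def IsBlockMove (p q : List ℕ) : Prop :=
  ∃ A X B Y C : List ℕ, X ≠ [] ∧ Y ≠ [] ∧
    p = A ++ X ++ B ++ Y ++ C ∧ q = A ++ Y ++ B ++ X ++ C

/-- `p` is a permutation of `{1,…,n}` in one-line notation. -/
def IsPermList (p : List ℕ) : Prop := p.Perm (List.range' 1 p.length)

/-- `p` can be sorted to the identity `1 2 … n` using at most `k` block moves. -/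
def SortableIn (p : List ℕ) (k : ℕ) : Prop :=
  ∃ m ≤ k, ∃ f : ℕ → List ℕ, f 0 = p ∧ f m = List.range' 1 p.length ∧
    ∀ i < m, IsBlockMove (f i) (f (i+1))

/-!
A permutation other than the identity reads `1 … r, M, r+1, T` with `M` nonempty. Let `d + 1`
be the least entry of `M` and split `M = M₁, d+1, M₂`. Then `r < d` and `d ∉ M`, so `d` occurs in
`r+1, T`; let `Y` be the block from `r+1` through `d`. Swapping `M₁` with `Y` (or `d+1, M₂` with
`Y` when `M₁` is empty) keeps the interior pairs of all blocks. Of the seams it touches, the old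
ones are all bad (three, or four if `M₁ ≠ []`), while among the new ones `(r, r+1)` and
`(d, d+1)` are good, leaving at most one (two) bad. So `b` drops by at least two; induct on `b`,
and use `b(p) ≤ n + 1`.
-/

open List

def badPairs : List ℕ → ℕ
  | a :: b :: t => (if a + 1 = b then 0 else 1) + badPairs (b :: t)
  | _ => 0

/-- Counts `0` when either list is empty, so that `badPairs_append` needs no side condition. -/
def badJoin (u v : List ℕ) : ℕ :=
  match u.getLast?, v.head? with
  | some a, some b => if a + 1 = b then 0 else 1
  | _, _ => 0

lemma badJoin_le_one (u v : List ℕ) : badJoin u v ≤ 1 := by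
  unfold badJoin
  split
  · split <;> omega
  · omega

lemma badJoin_eq_zero {u v : List ℕ} {a : ℕ} (ha : u.getLast? = some a)
    (hb : v.head? = some (a + 1)) : badJoin u v = 0 := by
  simp [badJoin, ha, hb]

lemma badJoin_eq_one {u v : List ℕ} {a b : ℕ} (ha : u.getLast? = some a)
    (hb : v.head? = some b) (hab : a + 1 ≠ b) : badJoin u v = 1 := by
  simp [badJoin, ha, hb, hab]

lemma ne_nil_of_badJoin_eq_one {u v : List ℕ} (h : badJoin u v = 1) : u ≠ [] ∧ v ≠ [] := by
  constructor <;> rintro rfl <;> simp [badJoin] at h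

lemma badJoin_append_left (u : List ℕ) {v : List ℕ} (w : List ℕ) (hv : v ≠ []) :
    badJoin (u ++ v) w = badJoin v w := by
  simp [badJoin, getLast?_append_of_ne_nil _ hv]

lemma badPairs_append (u v : List ℕ) :
    badPairs (u ++ v) = badPairs u + badJoin u v + badPairs v := by
  induction u with
  | nil => simp [badPairs, badJoin]
  | cons a u ih =>
    cases u with
    | nil => cases v <;> simp [badPairs, badJoin]
    | cons b u =>
      simp only [cons_append, badPairs] at ih ⊢
      rw [ih, show badJoin (a :: b :: u) v = badJoin (b :: u) v by simp [badJoin]]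
      omega

lemma card_filter_range_eq_badPairs (l : List ℕ) :
    ((Finset.range (l.length - 1)).filter
      (fun i => l.getD i 0 + 1 ≠ l.getD (i + 1) 0)).card = badPairs l := by
  induction l with
  | nil => simp [badPairs]
  | cons a l ih =>
    cases l with
    | nil => simp [badPairs]
    | cons b l =>
      rw [Finset.card_filter] at ih ⊢
      simp only [length_cons, Nat.add_sub_cancel] at ih ⊢
      rw [Finset.sum_range_succ']
      simp only [getD_cons_succ, getD_cons_zero] at ih ⊢
      rw [ih, badPairs]
      by_cases h : a + 1 = b <;> simp [h, add_comm]

lemma badNum_eq_badPairs (p : List ℕ) : badNum p = badPairs (extList p) := by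
  have h := card_filter_range_eq_badPairs (extList p)
  rwa [show (extList p).length - 1 = p.length + 1 by simp [extList]] at h

lemma badNum_le_length_add_one (p : List ℕ) : badNum p ≤ p.length + 1 :=
  (Finset.card_filter_le _ _).trans_eq (Finset.card_range _)

lemma isBlockMove_swap (A M B Y C : List ℕ) (hB : B ≠ []) (hY : Y ≠ []) :
    IsBlockMove (A ++ M ++ B ++ Y ++ C) (A ++ Y ++ B ++ M ++ C) := by
  rcases eq_or_ne M [] with rfl | hM
  · exact ⟨A, B, [], Y, C, hB, hY, by simp, by simp⟩
  · exact ⟨A, M, B, Y, C, hM, hY, rfl, rfl⟩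

lemma IsBlockMove.perm {p q : List ℕ} (h : IsBlockMove p q) : p ~ q := by
  obtain ⟨A, X, B, Y, C, -, -, rfl, rfl⟩ := h
  rw [perm_iff_count]
  intro a
  simp only [count_append]
  omega

lemma IsPermList.of_isBlockMove {p q : List ℕ} (hp : IsPermList p) (h : IsBlockMove p q) :
    IsPermList q := by
  rw [IsPermList, ← h.perm.length_eq]
  exact h.perm.symm.trans hp

lemma badPairs_swap_add_two_le_of_badJoin {E M B Y C : List ℕ}
    (hEMB : badJoin (E ++ M) B = 1) (hBY : badJoin B Y = 1) (hYC : badJoin Y C = 1)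
    (hEY : badJoin E Y = 0) (hYB : badJoin Y B = 0) (hEM : M ≠ [] → badJoin E M = 1) :
    badPairs (E ++ Y ++ B ++ M ++ C) + 2 ≤ badPairs (E ++ M ++ B ++ Y ++ C) := by
  obtain ⟨hB, hY⟩ := ne_nil_of_badJoin_eq_one hBY
  rcases eq_or_ne M [] with rfl | hM
  · simp only [append_nil, badPairs_append, badJoin_append_left _ _ hB,
      badJoin_append_left _ _ hY] at hEMB ⊢
    have := badJoin_le_one B C
    omega
  · have hEM := hEM hM
    simp only [badPairs_append, badJoin_append_left _ _ hB, badJoin_append_left _ _ hY,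
      badJoin_append_left _ _ hM] at hEMB ⊢
    have := badJoin_le_one B M
    have := badJoin_le_one M C
    omega

lemma List.Perm.eq_range'_or_exists_append {p : List ℕ} {s n : ℕ} (hp : p ~ range' s n) :
    p = range' s n ∨ ∃ r M T, M ≠ [] ∧ p = range' s r ++ M ++ (s + r) :: T := by
  induction n generalizing s p with
  | zero => exact .inl (perm_nil.1 hp)
  | succ n ih =>
    rw [range'_succ] at hp
    obtain ⟨M, T, rfl⟩ := append_of_mem (hp.mem_iff.2 mem_cons_self)
    rcases eq_or_ne M [] with rfl | hM
    · rcases ih (perm_cons _ |>.1 hp) with rfl | ⟨r, M, T', hM, rfl⟩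
      · exact .inl (by simp [range'_succ])
      · exact .inr ⟨r + 1, M, T', hM, by simp [range'_succ, Nat.add_assoc, Nat.add_comm 1]⟩
    · exact .inr ⟨0, M, T, hM, by simp⟩

lemma badPairs_swap_add_two_le {E M₁ M₂ Y C : List ℕ} {r d : ℕ}
    (hE : E.getLast? = some r) (hdE : d ∉ E) (hrd : r < d)
    (hY : Y.head? = some (r + 1)) (hYd : Y.getLast? = some d)
    (hM : ∀ v ∈ M₁ ++ (d + 1) :: M₂, d < v) (hC : C ≠ []) (hdC : d + 1 ∉ C) :
    badPairs (E ++ Y ++ (d + 1) :: M₂ ++ M₁ ++ C) + 2 ≤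
      badPairs (E ++ M₁ ++ (d + 1) :: M₂ ++ Y ++ C) := by
  have hEM : E ++ M₁ ≠ [] := by simp [← getLast?_eq_none_iff, hE]
  have hB : (d + 1) :: M₂ ≠ [] := cons_ne_nil _ _
  apply badPairs_swap_add_two_le_of_badJoin
  · refine badJoin_eq_one (getLast?_eq_some_getLast hEM) rfl fun h => ?_
    have hmem := getLast_mem hEM
    rw [show (E ++ M₁).getLast hEM = d by omega, mem_append] at hmem
    exact hmem.elim hdE fun h => (hM d (mem_append_left _ h)).false
  · have := hM _ (mem_append_right _ (getLast_mem hB))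
    exact badJoin_eq_one (getLast?_eq_some_getLast hB) hY (by omega)
  · refine badJoin_eq_one hYd (head?_eq_some_head hC) fun h => hdC ?_
    exact h ▸ head_mem hC
  · exact badJoin_eq_zero hE hY
  · exact badJoin_eq_zero hYd rfl
  · intro hM₁
    have := hM _ (mem_append_left _ (head_mem hM₁))
    exact badJoin_eq_one hE (head?_eq_some_head hM₁) (by omega)

lemma IsPermList.exists_swap_decomposition {p : List ℕ} (hp : IsPermList p)
    (hid : p ≠ range' 1 p.length) :
    ∃ r d M₁ M₂ Y C, p = range' 1 r ++ M₁ ++ (d + 1) :: M₂ ++ Y ++ C ∧ r < d ∧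
      d < p.length ∧ Y.head? = some (r + 1) ∧ Y.getLast? = some d ∧
      (∀ v ∈ M₁ ++ (d + 1) :: M₂, d < v) ∧ d + 1 ∉ C := by
  obtain ⟨r, M, T, hM, hpeq⟩ := hp.eq_range'_or_exists_append.resolve_left hid
  have hmem (v : ℕ) : v ∈ p ↔ 1 ≤ v ∧ v < 1 + p.length := hp.mem_iff.trans mem_range'_1
  have hnd := hp.nodup_iff.2 nodup_range'
  rw [hpeq, nodup_append, nodup_append] at hnd
  obtain ⟨⟨-, -, hAM⟩, -, hMT⟩ := hnd
  have hM_gt : ∀ v ∈ M, 1 + r < v := by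
    intro v hv
    have h1 := (hmem v).1 (by simp [hpeq, hv])
    have h2 : v ∉ range' 1 r := fun h => hAM v h v hv rfl
    have h3 : v ≠ 1 + r := hMT v (by simp [hv]) _ mem_cons_self
    rw [mem_range'_1] at h2
    omega
  obtain ⟨y, hy⟩ := Option.isSome_iff_exists.1 (isSome_min?_of_mem (head_mem hM))
  obtain ⟨hyM, hy_min⟩ := min?_eq_some_iff.1 hy
  have hry := hM_gt y hyM
  obtain ⟨d, rfl⟩ : ∃ d, y = d + 1 := ⟨y - 1, by omega⟩
  have hdn : d + 1 < 1 + p.length := ((hmem _).1 (by simp [hpeq, hyM])).2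
  have hdT : d ∈ (1 + r) :: T := by
    have hdp : d ∈ p := (hmem d).2 (by omega)
    rw [hpeq, mem_append, mem_append, mem_range'_1] at hdp
    rcases hdp with (h | h) | h
    · omega
    · exact absurd (hy_min d h) (by omega)
    · exact h
  obtain ⟨M₁, M₂, rfl⟩ := append_of_mem hyM
  obtain ⟨Y₀, C, hYC⟩ := append_of_mem hdT
  refine ⟨r, d, M₁, M₂, Y₀ ++ [d], C, by simp [hpeq, hYC], by omega, by omega, ?_,
    getLast?_concat, fun v hv => by have := hy_min v hv; omega, fun h => ?_⟩
  · rw [← head?_append_of_ne_nil _ (l₂ := C) (by simp), append_assoc, singleton_append, ← hYC,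
      head?_cons, Nat.add_comm]
  · exact hMT (d + 1) (by simp) (d + 1) (by simp [hYC, h]) rfl

theorem exists_isBlockMove_badNum_add_two_le {p : List ℕ} (hp : IsPermList p)
    (hid : p ≠ range' 1 p.length) : ∃ q, IsBlockMove p q ∧ badNum q + 2 ≤ badNum p := by
  obtain ⟨r, d, M₁, M₂, Y, C, hpeq, hrd, hdn, hY, hYd, hM, hdC⟩ :=
    hp.exists_swap_decomposition hid
  have hmove := isBlockMove_swap (range' 1 r) M₁ ((d + 1) :: M₂) Y C (cons_ne_nil _ _)
    (ne_nil_of_mem (mem_of_head? hY))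
  rw [← hpeq] at hmove
  refine ⟨_, hmove, ?_⟩
  have hE : (0 :: range' 1 r).getLast? = some r := by
    rw [← Nat.zero_add 1, ← range'_succ, getLast?_range']
    simp
  have hdE : d ∉ 0 :: range' 1 r := by simp [mem_range'_1]; omega
  have hdC' : d + 1 ∉ C ++ [p.length + 1] := by simp [hdC]; omega
  have key := badPairs_swap_add_two_le hE hdE hrd hY hYd hM (by simp) hdC'
  rw [badNum_eq_badPairs, badNum_eq_badPairs, extList, extList, ← hmove.perm.length_eq]
  set n := p.length
  rw [hpeq]
  simpa only [append_assoc, cons_append] using key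

lemma SortableIn.mono {p : List ℕ} {k k' : ℕ} (h : SortableIn p k) (hk : k ≤ k') :
    SortableIn p k' := by
  obtain ⟨m, hm, rest⟩ := h
  exact ⟨m, hm.trans hk, rest⟩

lemma SortableIn.zero {p : List ℕ} (h : p = range' 1 p.length) : SortableIn p 0 :=
  ⟨0, le_rfl, fun _ => p, rfl, h, by simp⟩

lemma SortableIn.of_isBlockMove {p q : List ℕ} {k : ℕ} (hpq : IsBlockMove p q)
    (hq : SortableIn q k) : SortableIn p (k + 1) := by
  obtain ⟨m, hm, f, hf0, hfm, hf⟩ := hq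
  refine ⟨m + 1, by omega, fun | 0 => p | i + 1 => f i, rfl, ?_, ?_⟩
  · exact hfm.trans (by rw [hpq.perm.length_eq])
  · rintro (_ | i) hi
    · exact (hf0 ▸ hpq :)
    · exact hf i (by omega)

theorem IsPermList.sortableIn_badNum_div_two {p : List ℕ} (hp : IsPermList p) :
    SortableIn p (badNum p / 2) := by
  induction h : badNum p using Nat.strong_induction_on generalizing p with
  | _ b ih =>
    by_cases hid : p = range' 1 p.length
    · exact (SortableIn.zero hid).mono (Nat.zero_le _)
    obtain ⟨q, hpq, hbad⟩ := exists_isBlockMove_badNum_add_two_le hp hid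
    have hq := ih (badNum q) (by omega) (hp.of_isBlockMove hpq) rfl
    exact (hq.of_isBlockMove hpq).mono (by omega)

/-- Every permutation can be sorted in at most `b(p)/2` block moves,
and hence in at most `⌊(n+1)/2⌋` block moves. -/
theorem sortable_badNum (p : List ℕ) (hp : IsPermList p) :
    SortableIn p (badNum p / 2) ∧ SortableIn p ((p.length + 1) / 2) :=
  ⟨hp.sortableIn_badNum_div_two,
    hp.sortableIn_badNum_div_two.mono (Nat.div_le_div_right (badNum_le_length_add_one p))⟩
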